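/- arXiv:2602.18409 — 4 statements merged into one kernel-verified Lean document; each statement's English description precedes it below -/
import Mathlib

section
/- Let G = (V,E,λ) and G' = (V',E',λ') be labelled directed graphs, 𝒯 a finite set of templates, and l ∈ ℕ. Run the 𝒯-WL algorithm (with the same injective HASH function) on both graphs for l rounds. Then for all v ∈ V and v' ∈ V', the pointed graphs (G,v) and (G',v') are graded l-𝒯-bisimilar if and only if col^l(v) = col^l(v'). -/
set_option maxHeartbeats 1000000

attribute [local instance 10] Classical.propDecidable

/-- A template `T = (V, E⁺, E⁻, r)`: vertex set `Fin (n+1)` (cardinality `n+1`),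
root `0`, edges `pos`, non-edges `neg`, with `pos ∩ neg = ∅`. -/
structure Template where
  n : ℕ
  pos : Finset (Fin (n + 1) × Fin (n + 1))
  neg : Finset (Fin (n + 1) × Fin (n + 1))
  disj : ∀ p, ¬(p ∈ pos ∧ p ∈ neg)

/-- A labelled directed graph with labels in `Λ`: a finite vertex set (a finite
subset of `ℕ`), an edge relation `E ⊆ V × V`, and a labelling of the nodes. -/
structure LGraph (Λ : Type) where
  verts : Finset ℕ
  edge : ℕ → ℕ → Prop
  lab : ℕ → Λ
  edge_mem : ∀ u w, edge u w → u ∈ verts ∧ w ∈ verts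

/-- `f` is a template embedding of `T` into the pointed graph `(G, w)`:
an injective map sending the root to `w`, `E⁺`-pairs to edges and `E⁻`-pairs to
non-edges. -/
def IsEmb {Λ : Type} (T : Template) (G : LGraph Λ) (w : ℕ) (f : Fin (T.n + 1) → ℕ) : Prop :=
  Function.Injective f ∧ f 0 = w ∧ (∀ i, f i ∈ G.verts) ∧
    (∀ p ∈ T.pos, G.edge (f p.1) (f p.2)) ∧ (∀ p ∈ T.neg, ¬ G.edge (f p.1) (f p.2))

/-- The (finite) set `emb(T,(G,w))` of template embeddings of `T` into `(G, w)`. -/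
noncomputable def embFinset {Λ : Type} (T : Template) (G : LGraph Λ) (w : ℕ) :
    Finset (Fin (T.n + 1) → ℕ) :=
  (Fintype.piFinset fun _ : Fin (T.n + 1) => G.verts).filter (IsEmb T G w)

/-- Forth condition: any `k` pairwise distinct template embeddings of `T` at `(G,v)`
can be matched by `k` pairwise distinct embeddings at `(G',v')`, pointwise related
by `Z`. -/
def Forth {Λ : Type} (Z : ℕ → ℕ → Prop) (T : Template) (G G' : LGraph Λ)
    (v v' : ℕ) (k : ℕ) : Prop :=
  ∀ F : Fin k → (Fin (T.n + 1) → ℕ), Function.Injective F → (∀ i, IsEmb T G v (F i)) →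
    ∃ F' : Fin k → (Fin (T.n + 1) → ℕ), Function.Injective F' ∧ (∀ i, IsEmb T G' v' (F' i)) ∧
      ∀ i u, Z (F i u) (F' i u)

/-- `Z` is a graded `l`-`𝒯`-bisimulation between `G` and `G'`, where the allowed
multiplicities `k` in the back-and-forth conditions are those satisfying `P`. -/
def IsBisimP {Λ : Type} (𝒯 : Finset Template) (P : ℕ → Prop) (G G' : LGraph Λ) :
    ℕ → (ℕ → ℕ → Prop) → Prop
  | 0, Z => ∀ v v', Z v v' → G.lab v = G'.lab v'
  | l + 1, Z => ∃ Z', IsBisimP 𝒯 P G G' l Z' ∧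
      ∀ v v', Z v v' → Z' v v' ∧ ∀ T ∈ 𝒯, ∀ k, P k →
        Forth Z' T G G' v v' k ∧ Forth (fun a b => Z' b a) T G' G v' v k

/-- `(G,v)` and `(G',v')` are graded `l`-`𝒯`-bisimilar. -/
def GBisimilar {Λ : Type} (𝒯 : Finset Template) (l : ℕ) (G : LGraph Λ) (v : ℕ)
    (G' : LGraph Λ) (v' : ℕ) : Prop :=
  ∃ Z, IsBisimP 𝒯 (fun k => 1 ≤ k) G G' l Z ∧ Z v v'

/-- `(G,v)` and `(G',v')` are `l`-`c`-`𝒯`-bisimilar (multiplicities restricted to `k ≤ c`). -/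
def BBisimilar {Λ : Type} (𝒯 : Finset Template) (l c : ℕ) (G : LGraph Λ) (v : ℕ)
    (G' : LGraph Λ) (v' : ℕ) : Prop :=
  ∃ Z, IsBisimP 𝒯 (fun k => 1 ≤ k ∧ k ≤ c) G G' l Z ∧ Z v v'

/-- `A↾c`: cap all multiplicities of a multiset at `c`. -/
noncomputable def mcap {α : Type} (c : ℕ) (m : Multiset α) : Multiset α :=
  m.toFinset.val.bind fun a => Multiset.replicate (min c (m.count a)) a

/-- The `𝒯`-WL colouring of `G` after `l` rounds, using `hash0` for the initial
colouring and `hash` for the refinement rounds; at each round the new colour of `v`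
hashes its previous colour together with, for each template `T ∈ 𝒯`, the multiset of
`T`-labelled colourings induced by the template embeddings at `v`. -/
noncomputable def colWL {Λ C : Type} (𝒯 : Finset Template) (hash0 : Λ → C)
    (hash : C → ((T : {x // x ∈ 𝒯}) → Multiset (Fin (T.1.n + 1) → C)) → C)
    (G : LGraph Λ) : ℕ → ℕ → C
  | 0, v => hash0 (G.lab v)
  | l + 1, v =>
      hash (colWL 𝒯 hash0 hash G l v)
        (fun T => (embFinset T.1 G v).val.map
          (fun f => fun u => colWL 𝒯 hash0 hash G l (f u)))

/-- A multiset function is `c`-bounded if its value is unchanged when all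
multiplicities larger than `c` are replaced by `c`. -/
def CBoundedFun {α β : Type} (c : ℕ) (g : Multiset α → β) : Prop :=
  ∀ m, g m = g (mcap c m)

/-- An `nAr`-ary `L`-layer `𝒯`-GNN with feature dimension `d`: templates from `𝒯`,
template-aggregation functions (invariant under root-fixing label-preserving template
automorphisms), outer multiset aggregation functions, combination functions, and a
Boolean classification function. -/
structure TGNN (𝒯 : Finset Template) (d nAr L : ℕ) where
  temp : Fin L → Fin nAr → Template
  temp_mem : ∀ l j, temp l j ∈ 𝒯
  aggT : (l : Fin L) → (j : Fin nAr) → ((Fin ((temp l j).n + 1) → (Fin d → ℝ)) → (Fin d → ℝ))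
  aggT_inv : ∀ (l : Fin L) (j : Fin nAr) (σ : Equiv.Perm (Fin ((temp l j).n + 1)))
      (lab₁ lab₂ : Fin ((temp l j).n + 1) → (Fin d → ℝ)),
      σ 0 = 0 →
      (∀ p : Fin ((temp l j).n + 1) × Fin ((temp l j).n + 1),
        p ∈ (temp l j).pos ↔ (σ p.1, σ p.2) ∈ (temp l j).pos) →
      (∀ p : Fin ((temp l j).n + 1) × Fin ((temp l j).n + 1),
        p ∈ (temp l j).neg ↔ (σ p.1, σ p.2) ∈ (temp l j).neg) →
      (∀ u, u ≠ 0 → lab₁ u = lab₂ (σ u)) →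
      aggT l j lab₁ = aggT l j lab₂
  agg : Fin L → Fin nAr → Multiset (Fin d → ℝ) → (Fin d → ℝ)
  comb : Fin L → (Fin d → ℝ) → (Fin nAr → (Fin d → ℝ)) → (Fin d → ℝ)
  cls : (Fin d → ℝ) → Bool

/-- The feature vector `λ^l(v)` of node `v` after `l` layers of the `𝒯`-GNN `N` on
input graph `G`. -/
noncomputable def TGNN.feat {𝒯 : Finset Template} {d nAr L : ℕ} (N : TGNN 𝒯 d nAr L)
    (G : LGraph (Fin d → ℝ)) : ℕ → ℕ → (Fin d → ℝ)
  | 0, v => G.lab v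
  | l + 1, v =>
      if h : l < L then
        N.comb ⟨l, h⟩ (N.feat G l v)
          (fun j => N.agg ⟨l, h⟩ j
            ((embFinset (N.temp ⟨l, h⟩ j) G v).val.map
              (fun f => N.aggT ⟨l, h⟩ j (fun u => N.feat G l (f u)))))
      else fun _ => 0

/-- A `𝒯`-GNN is `c`-bounded if all its outer aggregation functions are `c`-bounded. -/
def TGNN.IsCBounded {𝒯 : Finset Template} {d nAr L : ℕ} (N : TGNN 𝒯 d nAr L) (c : ℕ) : Prop :=
  ∀ l j, CBoundedFun c (N.agg l j)

def boolToReal (b : Bool) : ℝ := if b then 1 else 0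

/-- Identify a `{0,1}^d`-labelled graph with a real-vector labelled graph. -/
def LGraph.toReal {d : ℕ} (G : LGraph (Fin d → Bool)) : LGraph (Fin d → ℝ) :=
  ⟨G.verts, G.edge, fun v i => boolToReal (G.lab v i), G.edge_mem⟩

/-- Initialize real feature vectors of dimension `d'` from `{0,1}^a`-labels
(the first `a` coordinates hold the truth values of the propositions, the rest are `0`). -/
def initG {a : ℕ} (d' : ℕ) (G : LGraph (Fin a → Bool)) : LGraph (Fin d' → ℝ) :=
  ⟨G.verts, G.edge, fun v i => if h : (i : ℕ) < a then boolToReal (G.lab v ⟨i, h⟩) else 0,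
    G.edge_mem⟩

/-- Formulae of graded template modal logic `GML(𝒯)` over propositions `AP`
(`⊤` included; a modality `⟨T⟩^{≥j}(φ₁,…,φ_{n_T})` takes `n_T = |V_T| - 1` arguments). -/
inductive GML (AP : Type) : Type
  | top : GML AP
  | prop : AP → GML AP
  | neg : GML AP → GML AP
  | and : GML AP → GML AP → GML AP
  | dia : (T : Template) → ℕ → (Fin T.n → GML AP) → GML AP

/-- Semantics of `GML(𝒯)` on pointed labelled graphs:
`(G,v) ⊨ ⟨T⟩^{≥j}(φ⃗)` iff at least `j` embeddings `f ∈ emb(T,(G,v))` satisfy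
`(G, f(i)) ⊨ φᵢ` for all `1 ≤ i ≤ n_T`. -/
def Sat {AP : Type} (G : LGraph (AP → Bool)) : GML AP → ℕ → Prop
  | .top, _ => True
  | .prop p, v => G.lab v p = true
  | .neg φ, v => ¬ Sat G φ v
  | .and φ ψ, v => Sat G φ v ∧ Sat G ψ v
  | .dia T j φs, v =>
      j ≤ ((embFinset T G v).filter
        (fun f => ∀ i : Fin T.n, Sat G (φs i) (f i.succ))).card

/-- Modal depth. -/
def GML.md {AP : Type} : GML AP → ℕ
  | .top => 0
  | .prop _ => 0
  | .neg φ => φ.md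
  | .and φ ψ => max φ.md ψ.md
  | .dia _ _ φs => 1 + Finset.univ.sup fun i => (φs i).md

/-- Counting bound: the least `c` such that every modality `⟨T⟩^{≥j}` occurring in the
formula has `j ≤ c`. -/
def GML.cb {AP : Type} : GML AP → ℕ
  | .top => 0
  | .prop _ => 0
  | .neg φ => φ.cb
  | .and φ ψ => max φ.cb ψ.cb
  | .dia _ j φs => max j (Finset.univ.sup fun i => (φs i).cb)

/-- Syntactic depth: counts both Boolean connectives and modalities along the deepest
branch of the syntax tree. -/
def GML.sd {AP : Type} : GML AP → ℕ
  | .top => 0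
  | .prop _ => 0
  | .neg φ => 1 + φ.sd
  | .and φ ψ => 1 + max φ.sd ψ.sd
  | .dia _ _ φs => 1 + Finset.univ.sup fun i => (φs i).sd

/-- Well-formedness of a `GML(𝒯)` formula: all templates come from `𝒯` and all
grades satisfy `j ≥ 1`. -/
def GML.Wf {AP : Type} (𝒯 : Finset Template) : GML AP → Prop
  | .top => True
  | .prop _ => True
  | .neg φ => φ.Wf 𝒯
  | .and φ ψ => φ.Wf 𝒯 ∧ ψ.Wf 𝒯
  | .dia T j φs => T ∈ 𝒯 ∧ 1 ≤ j ∧ ∀ i, (φs i).Wf 𝒯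

/-- Finite conjunction (`⊤` for the empty list). -/
def bigConj {AP : Type} : List (GML AP) → GML AP
  | [] => .top
  | φ :: rest => .and φ (bigConj rest)

/-- `|S^{(G,v)}_{T,φ⃗}|`: the number of embeddings `f ∈ emb(T,(G,v))` with
`(G, f(i)) ⊨ φᵢ` for all `1 ≤ i ≤ n_T`. -/
noncomputable def Scard {AP : Type} (G : LGraph (AP → Bool)) (T : Template) (v : ℕ)
    (φs : Fin T.n → GML AP) : ℕ :=
  ((embFinset T G v).filter (fun f => ∀ i : Fin T.n, Sat G (φs i) (f i.succ))).card

/-- The `l`-characteristic formula `χ^l_{(G,v)}`. -/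
noncomputable def charU {AP : Type} [Fintype AP] (𝒯 : Finset Template) :
    ℕ → LGraph (AP → Bool) → ℕ → GML AP
  | 0 => fun G v =>
      bigConj ((Finset.univ : Finset AP).toList.map
        (fun p => if G.lab v p then GML.prop p else GML.neg (GML.prop p)))
  | l + 1 => fun G v =>
      GML.and (charU 𝒯 l G v)
        (bigConj (𝒯.toList.map (fun T =>
          GML.and
            (bigConj ((embFinset T G v).toList.map (fun f =>
              GML.dia T (Scard G T v (fun i => charU 𝒯 l G (f i.succ)))
                (fun i => charU 𝒯 l G (f i.succ)))))
            (GML.neg (GML.dia T (Scard G T v (fun _ => GML.top) + 1)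
              (fun _ => GML.top))))))

/-- `reps m` is a system of representatives for the `m`-`c`-`𝒯`-bisimilarity classes of
finite pointed labelled graphs: every representative is a genuine pointed graph, every
pointed graph is `m`-`c`-`𝒯`-bisimilar to some representative, and distinct
representatives are non-bisimilar. -/
def RepSystem {AP : Type} (𝒯 : Finset Template) (c : ℕ)
    (reps : ℕ → Finset (LGraph (AP → Bool) × ℕ)) : Prop :=
  ∀ m : ℕ,
    (∀ q ∈ reps m, q.2 ∈ q.1.verts) ∧
    (∀ (G : LGraph (AP → Bool)) (v : ℕ), v ∈ G.verts →
      ∃ q ∈ reps m, BBisimilar 𝒯 m c q.1 q.2 G v) ∧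
    (∀ q ∈ reps m, ∀ q' ∈ reps m, BBisimilar 𝒯 m c q.1 q.2 q'.1 q'.2 → q = q')

/-- The bounded `l`-`c`-characteristic formula `χ^{l,c}_{(G,v)}`, relative to a chosen
system `reps` of representatives of the bounded bisimilarity classes. -/
noncomputable def charB {AP : Type} [Fintype AP] (𝒯 : Finset Template) (c : ℕ)
    (reps : ℕ → Finset (LGraph (AP → Bool) × ℕ)) :
    ℕ → LGraph (AP → Bool) → ℕ → GML AP
  | 0 => fun G v =>
      bigConj ((Finset.univ : Finset AP).toList.map
        (fun p => if G.lab v p then GML.prop p else GML.neg (GML.prop p)))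
  | l + 1 => fun G v =>
      GML.and (charB 𝒯 c reps l G v)
        (bigConj (𝒯.toList.map (fun T =>
          GML.and
            (bigConj ((embFinset T G v).toList.map (fun f =>
              GML.dia T (min c (Scard G T v (fun i => charB 𝒯 c reps l G (f i.succ))))
                (fun i => charB 𝒯 c reps l G (f i.succ)))))
            (bigConj (((Fintype.piFinset (fun _ : Fin T.n => reps l)).filter
                (fun t => Scard G T v
                  (fun i => charB 𝒯 c reps l (t i).1 (t i).2) + 1 ≤ c)).toList.map
              (fun t => GML.neg (GML.dia T
                  (Scard G T v (fun i => charB 𝒯 c reps l (t i).1 (t i).2) + 1)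
                  (fun i => charB 𝒯 c reps l (t i).1 (t i).2))))))))

/-- Standard graded forth condition on out-neighbours. -/
def StdForth {Λ : Type} (Z : ℕ → ℕ → Prop) (G G' : LGraph Λ) (v v' : ℕ) (k : ℕ) : Prop :=
  ∀ us : Fin k → ℕ, Function.Injective us → (∀ i, G.edge v (us i)) →
    ∃ us' : Fin k → ℕ, Function.Injective us' ∧ (∀ i, G'.edge v' (us' i)) ∧
      ∀ i, Z (us i) (us' i)

/-- `Z` is a standard graded `l`-bisimulation (the relation underlying standard 1-WL
colour refinement). -/
def IsStdBisim {Λ : Type} (G G' : LGraph Λ) : ℕ → (ℕ → ℕ → Prop) → Prop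
  | 0, Z => ∀ v v', Z v v' → G.lab v = G'.lab v'
  | l + 1, Z => ∃ Z', IsStdBisim G G' l Z' ∧
      ∀ v v', Z v v' → Z' v v' ∧ ∀ k, 1 ≤ k →
        StdForth Z' G G' v v' k ∧ StdForth (fun a b => Z' b a) G' G v' v k

/-- `(G,v)` and `(G',v')` are standard graded `l`-bisimilar. -/
def StdBisimilar {Λ : Type} (l : ℕ) (G : LGraph Λ) (v : ℕ) (G' : LGraph Λ) (v' : ℕ) : Prop :=
  ∃ Z, IsStdBisim G G' l Z ∧ Z v v'

/-- The edge template `T₁ = ({r,a}, E⁺ = {(r,a)}, E⁻ = ∅, r)`. -/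
def T1 : Template := ⟨1, {(0, 1)}, ∅, by decide⟩

/-- The triangle template `T△ = ({r,a,b}, E⁺ = {(r,a),(a,b),(b,r)}, E⁻ = ∅, r)`. -/
def Ttri : Template := ⟨2, {(0, 1), (1, 2), (2, 0)}, ∅, by decide⟩

/-- The directed 3-cycle, all nodes with the same constant label. -/
def G3 : LGraph Unit where
  verts := {0, 1, 2}
  edge u w := (u = 0 ∧ w = 1) ∨ (u = 1 ∧ w = 2) ∨ (u = 2 ∧ w = 0)
  lab _ := ()
  edge_mem := by rintro u w (⟨rfl, rfl⟩ | ⟨rfl, rfl⟩ | ⟨rfl, rfl⟩) <;> simp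

/-- The directed 6-cycle, all nodes with the same constant label. -/
def G6 : LGraph Unit where
  verts := Finset.range 6
  edge u w := u < 6 ∧ w = (u + 1) % 6
  lab _ := ()
  edge_mem := by
    rintro u w ⟨hu, rfl⟩
    simp only [Finset.mem_range]
    omega
section Helpers

variable {Λ C : Type}

lemma mem_embFinset {T : Template} {G : LGraph Λ} {w : ℕ}
    {f : Fin (T.n + 1) → ℕ} : f ∈ embFinset T G w ↔ IsEmb T G w f := by
  constructor
  · intro h; exact (Finset.mem_filter.mp h).2
  · intro h
    exact Finset.mem_filter.mpr ⟨Fintype.mem_piFinset.mpr h.2.2.1, h⟩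

lemma count_pattern (col : ℕ → C) (T : Template) (G : LGraph Λ) (v : ℕ)
    (g : Fin (T.n + 1) → C) :
    Multiset.count g ((embFinset T G v).val.map (fun f u => col (f u)))
      = ((embFinset T G v).filter (fun f => g = fun u => col (f u))).card := by
  rw [Multiset.count_map]
  rfl

/-- From equality of pattern multisets, build the matching injective family. -/
lemma forth_of_map_eq (col col' : ℕ → C) (T : Template) (G G' : LGraph Λ)
    (v v' : ℕ)
    (h : (embFinset T G v).val.map (fun f u => col (f u))
       = (embFinset T G' v').val.map (fun f u => col' (f u)))
    (k : ℕ) (F : Fin k → (Fin (T.n + 1) → ℕ)) (hFinj : Function.Injective F)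
    (hFemb : ∀ i, IsEmb T G v (F i)) :
    ∃ F' : Fin k → (Fin (T.n + 1) → ℕ), Function.Injective F' ∧
      (∀ i, IsEmb T G' v' (F' i)) ∧ ∀ i u, col (F i u) = col' (F' i u) := by
  classical
  set c : (Fin (T.n + 1) → ℕ) → (Fin (T.n + 1) → C) := fun f u => col (f u) with hc
  set c' : (Fin (T.n + 1) → ℕ) → (Fin (T.n + 1) → C) := fun f u => col' (f u) with hc'
  set p : Fin k → (Fin (T.n + 1) → C) := fun i => c (F i) with hp
  have hcard : ∀ g : Fin (T.n + 1) → C,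
      (Finset.univ.filter (fun i : Fin k => p i = g)).card
        ≤ ((embFinset T G' v').filter (fun f => g = c' f)).card := by
    intro g
    have h1 : (Finset.univ.filter (fun i : Fin k => p i = g)).card
        ≤ ((embFinset T G v).filter (fun f => g = c f)).card := by
      apply Finset.card_le_card_of_injOn F
      · intro i hi
        rcases Finset.mem_filter.mp hi with ⟨-, hg⟩
        exact Finset.mem_filter.mpr ⟨mem_embFinset.mpr (hFemb i), hg.symm⟩
      · exact Function.Injective.injOn hFinj
    have h2 : ((embFinset T G v).filter (fun f => g = c f)).card
        = ((embFinset T G' v').filter (fun f => g = c' f)).card := by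
      have := congrArg (Multiset.count g) h
      rwa [count_pattern col T G v g, count_pattern col' T G' v' g] at this
    omega
  have hemb : ∀ g : Fin (T.n + 1) → C,
      Nonempty ({i : Fin k // p i = g} ↪
        ((embFinset T G' v').filter (fun f => g = c' f) : Finset _)) := by
    intro g
    apply Function.Embedding.nonempty_of_card_le
    rw [Fintype.card_subtype, Fintype.card_coe]
    exact hcard g
  let E : (g : Fin (T.n + 1) → C) → ({i : Fin k // p i = g} ↪
      ((embFinset T G' v').filter (fun f => g = c' f) : Finset _)) :=
    fun g => Classical.choice (hemb g)
  let e : (Fin (T.n + 1) → C) → Fin k → (Fin (T.n + 1) → ℕ) :=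
    fun g i => if h : p i = g then ((E g) ⟨i, h⟩ : Fin (T.n + 1) → ℕ) else fun _ => 0
  refine ⟨fun i => e (p i) i, ?_, ?_, ?_⟩
  · intro i j hij
    have hij' : e (p i) i = e (p j) j := hij
    have hmem : ∀ (i : Fin k), e (p i) i ∈
        (embFinset T G' v').filter (fun f => p i = c' f) := by
      intro i
      have : e (p i) i = ((E (p i)) ⟨i, rfl⟩ : Fin (T.n + 1) → ℕ) := by
        simp [e]
      rw [this]
      exact ((E (p i)) ⟨i, rfl⟩).2
    have hpi : p i = c' (e (p i) i) := (Finset.mem_filter.mp (hmem i)).2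
    have hpj : p j = c' (e (p j) j) := (Finset.mem_filter.mp (hmem j)).2
    have hg : p i = p j := by rw [hpi, hpj, hij']
    have hej : e (p j) j = e (p i) j := by rw [hg]
    have h1 : e (p i) i = ((E (p i)) ⟨i, rfl⟩ : Fin (T.n + 1) → ℕ) := by simp [e]
    have h2 : e (p i) j = ((E (p i)) ⟨j, hg.symm⟩ : Fin (T.n + 1) → ℕ) := by
      simp [e, hg.symm]
    have : ((E (p i)) ⟨i, rfl⟩ : { x // x ∈ _ }) = (E (p i)) ⟨j, hg.symm⟩ := by
      apply Subtype.ext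
      rw [← h1, ← h2, ← hej, hij']
    have := (E (p i)).injective this
    exact congrArg Subtype.val this
  · intro i
    show IsEmb T G' v' (e (p i) i)
    have : e (p i) i = ((E (p i)) ⟨i, rfl⟩ : Fin (T.n + 1) → ℕ) := by simp [e]
    rw [this]
    exact mem_embFinset.mp (Finset.mem_filter.mp ((E (p i)) ⟨i, rfl⟩).2).1
  · intro i u
    show col (F i u) = col' (e (p i) i u)
    have h1 : e (p i) i = ((E (p i)) ⟨i, rfl⟩ : Fin (T.n + 1) → ℕ) := by simp [e]
    have hpi : p i = c' (e (p i) i) := by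
      rw [h1]; exact (Finset.mem_filter.mp ((E (p i)) ⟨i, rfl⟩).2).2
    exact congrFun hpi u

end Helpers

section Main

variable {Λ C : Type} (𝒯 : Finset Template)
    (hash0 : Λ → C)
    (hash : C → ((T : {x // x ∈ 𝒯}) → Multiset (Fin (T.1.n + 1) → C)) → C)

/-- Forward direction: bisimilar implies equal colours. -/
lemma col_eq_of_bisim (G G' : LGraph Λ) (h0inj : Function.Injective hash0) :
    ∀ (l : ℕ) (Z : ℕ → ℕ → Prop), IsBisimP 𝒯 (fun k => 1 ≤ k) G G' l Z →
    ∀ v v', Z v v' → colWL 𝒯 hash0 hash G l v = colWL 𝒯 hash0 hash G' l v' := by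
  intro l
  induction l with
  | zero =>
    intro Z hZ v v' hvv
    simp only [colWL]
    exact congrArg hash0 (hZ v v' hvv)
  | succ l ih =>
    intro Z hZ v v' hvv
    obtain ⟨Z', hZ', hcond⟩ := hZ
    obtain ⟨hZ'vv, hforth⟩ := hcond v v' hvv
    simp only [colWL]
    congr 1
    · exact ih Z' hZ' v v' hZ'vv
    · funext T
      apply Multiset.ext.mpr
      intro g
      rw [count_pattern (colWL 𝒯 hash0 hash G l) T.1 G v g,
        count_pattern (colWL 𝒯 hash0 hash G' l) T.1 G' v' g]
      apply le_antisymm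
      · set A := (embFinset T.1 G v).filter
            (fun f => g = fun u => colWL 𝒯 hash0 hash G l (f u)) with hA
        rcases Nat.eq_zero_or_pos A.card with h0 | hpos
        · exact le_of_eq_of_le h0 (Nat.zero_le _)
        · obtain ⟨hf, hb⟩ := hforth T.1 T.2 A.card hpos
          set F : Fin A.card → (Fin (T.1.n + 1) → ℕ) :=
            fun i => (A.equivFin.symm i).1 with hF
          have hFinj : Function.Injective F :=
            fun i j hij => A.equivFin.symm.injective (Subtype.ext hij)
          have hFA : ∀ i, F i ∈ A := fun i => (A.equivFin.symm i).2
          have hFemb : ∀ i, IsEmb T.1 G v (F i) := fun i =>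
            mem_embFinset.mp (Finset.mem_filter.mp (hFA i)).1
          obtain ⟨F', hF'inj, hF'emb, hF'rel⟩ := hf F hFinj hFemb
          have h3 : (Finset.univ : Finset (Fin A.card)).card ≤
              ((embFinset T.1 G' v').filter
                (fun f => g = fun u => colWL 𝒯 hash0 hash G' l (f u))).card := by
            apply Finset.card_le_card_of_injOn F'
            · intro i _
              apply Finset.mem_filter.mpr
              refine ⟨mem_embFinset.mpr (hF'emb i), ?_⟩
              have hgF : g = fun u => colWL 𝒯 hash0 hash G l (F i u) :=
                (Finset.mem_filter.mp (hFA i)).2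
              rw [hgF]
              funext u
              exact ih Z' hZ' _ _ (hF'rel i u)
            · exact Function.Injective.injOn hF'inj
          simpa using h3
      · set A := (embFinset T.1 G' v').filter
            (fun f => g = fun u => colWL 𝒯 hash0 hash G' l (f u)) with hA
        rcases Nat.eq_zero_or_pos A.card with h0 | hpos
        · exact le_of_eq_of_le h0 (Nat.zero_le _)
        · obtain ⟨hf, hb⟩ := hforth T.1 T.2 A.card hpos
          set F : Fin A.card → (Fin (T.1.n + 1) → ℕ) :=
            fun i => (A.equivFin.symm i).1 with hF
          have hFinj : Function.Injective F :=
            fun i j hij => A.equivFin.symm.injective (Subtype.ext hij)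
          have hFA : ∀ i, F i ∈ A := fun i => (A.equivFin.symm i).2
          have hFemb : ∀ i, IsEmb T.1 G' v' (F i) := fun i =>
            mem_embFinset.mp (Finset.mem_filter.mp (hFA i)).1
          obtain ⟨F', hF'inj, hF'emb, hF'rel⟩ := hb F hFinj hFemb
          have h3 : (Finset.univ : Finset (Fin A.card)).card ≤
              ((embFinset T.1 G v).filter
                (fun f => g = fun u => colWL 𝒯 hash0 hash G l (f u))).card := by
            apply Finset.card_le_card_of_injOn F'
            · intro i _
              apply Finset.mem_filter.mpr
              refine ⟨mem_embFinset.mpr (hF'emb i), ?_⟩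
              have hgF : g = fun u => colWL 𝒯 hash0 hash G' l (F i u) :=
                (Finset.mem_filter.mp (hFA i)).2
              rw [hgF]
              funext u
              exact (ih Z' hZ' _ _ (hF'rel i u)).symm
            · exact Function.Injective.injOn hF'inj
          simpa using h3

/-- Backward direction: colour equality is itself a graded bisimulation. -/
lemma isBisim_colZ (G G' : LGraph Λ) (h0inj : Function.Injective hash0)
    (hinj : Function.Injective
      (fun p : C × ((T : {x // x ∈ 𝒯}) → Multiset (Fin (T.1.n + 1) → C)) => hash p.1 p.2)) :
    ∀ l : ℕ, IsBisimP 𝒯 (fun k => 1 ≤ k) G G' l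
      (fun a b => colWL 𝒯 hash0 hash G l a = colWL 𝒯 hash0 hash G' l b) := by
  intro l
  induction l with
  | zero =>
    intro v v' hvv
    simp only [colWL] at hvv
    exact h0inj hvv
  | succ l ih =>
    refine ⟨_, ih, ?_⟩
    intro v v' hvv
    simp only [colWL] at hvv
    have hpair := @hinj
      (colWL 𝒯 hash0 hash G l v, fun T => (embFinset T.1 G v).val.map
        (fun f u => colWL 𝒯 hash0 hash G l (f u)))
      (colWL 𝒯 hash0 hash G' l v', fun T => (embFinset T.1 G' v').val.map
        (fun f u => colWL 𝒯 hash0 hash G' l (f u)))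
      hvv
    have h1 : colWL 𝒯 hash0 hash G l v = colWL 𝒯 hash0 hash G' l v' :=
      congrArg Prod.fst hpair
    have h2 := congrArg Prod.snd hpair
    refine ⟨h1, ?_⟩
    intro T hT k _
    have hM : (embFinset T G v).val.map
          (fun f u => colWL 𝒯 hash0 hash G l (f u))
        = (embFinset T G' v').val.map
          (fun f u => colWL 𝒯 hash0 hash G' l (f u)) :=
      congrFun h2 ⟨T, hT⟩
    constructor
    · intro F hFinj hFemb
      exact forth_of_map_eq _ _ T G G' v v' hM k F hFinj hFemb
    · intro F hFinj hFemb
      obtain ⟨F', hF'inj, hF'emb, hrel⟩ :=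
        forth_of_map_eq _ _ T G' G v' v hM.symm k F hFinj hFemb
      exact ⟨F', hF'inj, hF'emb, fun i u => (hrel i u).symm⟩

end Main

/-- Graded `l`-`𝒯`-bisimilarity coincides with indistinguishability by
`l` rounds of the `𝒯`-WL algorithm (run with the same injective hash functions on both
graphs). -/
theorem TWL_iff_gradedBisimilar {Λ C : Type} (𝒯 : Finset Template)
    (hash0 : Λ → C)
    (hash : C → ((T : {x // x ∈ 𝒯}) → Multiset (Fin (T.1.n + 1) → C)) → C)
    (h0inj : Function.Injective hash0)
    (hinj : Function.Injective
      (fun p : C × ((T : {x // x ∈ 𝒯}) → Multiset (Fin (T.1.n + 1) → C)) => hash p.1 p.2))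
    (G G' : LGraph Λ) (l : ℕ) (v v' : ℕ) (hv : v ∈ G.verts) (hv' : v' ∈ G'.verts) :
    GBisimilar 𝒯 l G v G' v' ↔ colWL 𝒯 hash0 hash G l v = colWL 𝒯 hash0 hash G' l v' := by
  constructor
  · rintro ⟨Z, hZ, hvv⟩
    exact col_eq_of_bisim 𝒯 hash0 hash G G' h0inj l Z hZ v v' hvv
  · intro h
    exact ⟨_, isBisim_colZ 𝒯 hash0 hash G G' h0inj hinj l, h⟩
end

section
/- Let G and G' be labelled directed graphs, 𝒯 a finite set of templates, 𝒩 any (not necessarily bounded) L-layer 𝒯-GNN, and l ≤ L. If (v,v') ∈ V×V' are graded l-𝒯-bisimilar, then v and v' have the same feature vectors at the l-th layer of 𝒩, i.e., λ^l(v) = λ^l(v'). -/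
set_option maxHeartbeats 1000000

attribute [local instance 10] Classical.propDecidable

lemma mem_embFinset_iff {Λ : Type} (T : Template) (G : LGraph Λ) (w : ℕ)
    (f : Fin (T.n + 1) → ℕ) : f ∈ embFinset T G w ↔ IsEmb T G w f := by
  simp only [embFinset, Finset.mem_filter, Fintype.mem_piFinset]
  exact ⟨fun h => h.2, fun h => ⟨h.2.2.1, h⟩⟩

lemma enum_val {α : Type} (S : Finset α) {k : ℕ} (F : Fin k → α)
    (hinj : Function.Injective F) (hmem : ∀ i, F i ∈ S) (hcard : S.card = k) :
    S.val = Multiset.map F (Finset.univ : Finset (Fin k)).val := by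
  classical
  have himg : Finset.image F Finset.univ = S := by
    apply Finset.eq_of_subset_of_card_le
    · intro x hx
      obtain ⟨i, _, rfl⟩ := Finset.mem_image.1 hx
      exact hmem i
    · rw [Finset.card_image_of_injective _ hinj, Finset.card_univ, Fintype.card_fin]
      exact hcard.le
  have := Finset.image_val_of_injOn (f := F) (s := Finset.univ) (hinj.injOn)
  rw [himg] at this
  exact this

lemma card_le_of_inj {α : Type} (A B : Finset α)
    (h : ∀ F : Fin A.card → α, Function.Injective F → (∀ i, F i ∈ A) →
      ∃ F' : Fin A.card → α, Function.Injective F' ∧ ∀ i, F' i ∈ B) :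
    A.card ≤ B.card := by
  classical
  set F : Fin A.card → α := fun i => (A.equivFin.symm i : α) with hF
  obtain ⟨F', hinj', hmem'⟩ := h F
    (fun i j hij => A.equivFin.symm.injective (Subtype.coe_injective hij))
    (fun i => (A.equivFin.symm i).2)
  calc A.card = (Finset.univ : Finset (Fin A.card)).card := by simp
    _ ≤ B.card := Finset.card_le_card_of_injOn F' (fun i _ => hmem' i) hinj'.injOn

lemma gnn_feat_eq_of_bisim {d nAr L : ℕ} (𝒯 : Finset Template)
    (N : TGNN 𝒯 d nAr L) : ∀ l, l ≤ L → ∀ (G G' : LGraph (Fin d → ℝ))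
    (Z : ℕ → ℕ → Prop), IsBisimP 𝒯 (fun k => 1 ≤ k) G G' l Z →
    ∀ v v', Z v v' → N.feat G l v = N.feat G' l v' := by
  intro l
  induction l with
  | zero =>
    intro _ G G' Z hZ v v' hvv'
    simpa [TGNN.feat] using hZ v v' hvv'
  | succ l ih =>
    intro hl G G' Z hZ v v' hvv'
    obtain ⟨Z', hZ', hstep⟩ := hZ
    have hl' : l ≤ L := Nat.le_of_succ_le hl
    have hlL : l < L := hl
    obtain ⟨hZvv', hTk⟩ := hstep v v' hvv'
    have hfeat : N.feat G l v = N.feat G' l v' := ih hl' G G' Z' hZ' v v' hZvv'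
    have key : ∀ j : Fin nAr,
        Multiset.map (fun f => N.aggT ⟨l, hlL⟩ j fun u => N.feat G l (f u))
          (embFinset (N.temp ⟨l, hlL⟩ j) G v).val =
        Multiset.map (fun f => N.aggT ⟨l, hlL⟩ j fun u => N.feat G' l (f u))
          (embFinset (N.temp ⟨l, hlL⟩ j) G' v').val := ?_
    · simp only [TGNN.feat, dif_pos hlL, hfeat]
      exact congrArg _ (funext fun j => congrArg _ (key j))
    intro j
    set T := N.temp ⟨l, hlL⟩ j with hT
    have hTmem : T ∈ 𝒯 := N.temp_mem _ _
    set S := embFinset T G v with hS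
    set S' := embFinset T G' v' with hS'
    -- cardinalities agree
    have hle : S.card ≤ S'.card := by
      apply card_le_of_inj
      intro F hFinj hFmem
      rcases Nat.eq_zero_or_pos S.card with h0 | h0
      · exact ⟨F, hFinj, fun i => absurd i.2 (by omega)⟩
      obtain ⟨F', hF'inj, hF'emb, _⟩ :=
        (hTk T hTmem S.card h0).1 F hFinj (fun i => (mem_embFinset_iff _ _ _ _).1 (hFmem i))
      exact ⟨F', hF'inj, fun i => (mem_embFinset_iff _ _ _ _).2 (hF'emb i)⟩
    have hge : S'.card ≤ S.card := by
      apply card_le_of_inj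
      intro F hFinj hFmem
      rcases Nat.eq_zero_or_pos S'.card with h0 | h0
      · exact ⟨F, hFinj, fun i => absurd i.2 (by omega)⟩
      obtain ⟨F', hF'inj, hF'emb, _⟩ :=
        (hTk T hTmem S'.card h0).2 F hFinj (fun i => (mem_embFinset_iff _ _ _ _).1 (hFmem i))
      exact ⟨F', hF'inj, fun i => (mem_embFinset_iff _ _ _ _).2 (hF'emb i)⟩
    have hcard : S.card = S'.card := le_antisymm hle hge
    rcases Nat.eq_zero_or_pos S.card with h0 | h0
    · have h0' : S'.card = 0 := by omega
      rw [Finset.card_eq_zero] at h0 h0'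
      simp [h0, h0']
    -- enumerate S
    set F : Fin S.card → (Fin (T.n + 1) → ℕ) := fun i => (S.equivFin.symm i : _) with hFdef
    have hFinj : Function.Injective F :=
      fun i j hij => S.equivFin.symm.injective (Subtype.coe_injective hij)
    have hFmem : ∀ i, F i ∈ S := fun i => (S.equivFin.symm i).2
    obtain ⟨F', hF'inj, hF'emb, hrel⟩ :=
      (hTk T hTmem S.card h0).1 F hFinj (fun i => (mem_embFinset_iff _ _ _ _).1 (hFmem i))
    have hF'mem : ∀ i, F' i ∈ S' := fun i => (mem_embFinset_iff _ _ _ _).2 (hF'emb i)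
    have he1 : S.val = Multiset.map F (Finset.univ : Finset (Fin S.card)).val :=
      enum_val S F hFinj hFmem rfl
    have he2 : S'.val = Multiset.map F' (Finset.univ : Finset (Fin S.card)).val :=
      enum_val S' F' hF'inj hF'mem hcard.symm
    rw [he1, he2, Multiset.map_map, Multiset.map_map]
    apply Multiset.map_congr rfl
    intro i _
    simp only [Function.comp]
    exact congrArg _ (funext fun u => ih hl' G G' Z' hZ' _ _ (hrel i u))


/-- If `(v,v')` are graded `l`-`𝒯`-bisimilar and `𝒩` is any (not
necessarily bounded) `L`-layer `𝒯`-GNN with `l ≤ L`, then `v` and `v'` get the same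
feature vectors at the `l`-th layer of `𝒩`. -/
theorem gnn_invariant_graded_bisim {d nAr L : ℕ} (𝒯 : Finset Template)
    (N : TGNN 𝒯 d nAr L) (l : ℕ) (hl : l ≤ L)
    (G G' : LGraph (Fin d → ℝ)) (v v' : ℕ)
    (hv : v ∈ G.verts) (hv' : v' ∈ G'.verts)
    (hbis : GBisimilar 𝒯 l G v G' v') :
    N.feat G l v = N.feat G' l v' := by
  obtain ⟨Z, hZ, hvv'⟩ := hbis
  exact gnn_feat_eq_of_bisim 𝒯 N l hl G G' Z hZ v v' hvv'
end

section
/- Every GML(𝒯) formula φ of modal depth at most l and counting bound at most c is invariant under l-c-𝒯-bisimulation: if pointed labelled graphs (G,v) and (G',v') are l-c-𝒯-bisimilar, then (G,v) ⊨ φ if and only if (G',v') ⊨ φ. -/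
set_option maxHeartbeats 1000000

attribute [local instance 10] Classical.propDecidable

lemma lab_eq_of_bisim {Λ : Type} (𝒯 : Finset Template) (P : ℕ → Prop) (G G' : LGraph Λ) :
    ∀ (l : ℕ) (Z : ℕ → ℕ → Prop), IsBisimP 𝒯 P G G' l Z →
      ∀ v v', Z v v' → G.lab v = G'.lab v' := by
  intro l
  induction l with
  | zero => intro Z h v v' hz; exact h v v' hz
  | succ l ih =>
    rintro Z ⟨Z', hZ', h⟩ v v' hz
    exact ih Z' hZ' v v' (h v v' hz).1

lemma sat_iff_of_bisim {AP : Type} (𝒯 : Finset Template) (c : ℕ) (φ : GML AP) :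
    φ.Wf 𝒯 → ∀ (l : ℕ), φ.md ≤ l → φ.cb ≤ c →
      ∀ (G G' : LGraph (AP → Bool)) (Z : ℕ → ℕ → Prop),
        IsBisimP 𝒯 (fun k => 1 ≤ k ∧ k ≤ c) G G' l Z →
        ∀ v v', Z v v' → (Sat G φ v ↔ Sat G' φ v') := by
  induction φ with
  | top => intros; simp [Sat]
  | prop p =>
    intro _ l _ _ G G' Z hZ v v' hz
    simp only [Sat]
    rw [lab_eq_of_bisim 𝒯 _ G G' l Z hZ v v' hz]
  | neg φ ih =>
    intro hwf l hmd hcb G G' Z hZ v v' hz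
    simp only [Sat]
    exact not_congr (ih hwf l hmd hcb G G' Z hZ v v' hz)
  | and φ ψ ihφ ihψ =>
    intro hwf l hmd hcb G G' Z hZ v v' hz
    simp only [Sat]
    exact and_congr
      (ihφ hwf.1 l (le_trans (le_max_left _ _) hmd) (le_trans (le_max_left _ _) hcb)
        G G' Z hZ v v' hz)
      (ihψ hwf.2 l (le_trans (le_max_right _ _) hmd) (le_trans (le_max_right _ _) hcb)
        G G' Z hZ v v' hz)
  | dia T j φs ih =>
    intro hwf l hmd hcb G G' Z hZ v v' hz
    obtain ⟨hT, hj1, hwfs⟩ := hwf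
    cases l with
    | zero =>
      exfalso
      simp only [GML.md] at hmd
      omega
    | succ l =>
      have hmds : ∀ i, (φs i).md ≤ l := by
        intro i
        have h1 : (φs i).md ≤ Finset.univ.sup fun i => (φs i).md :=
          Finset.le_sup (f := fun i => (φs i).md) (Finset.mem_univ i)
        simp only [GML.md] at hmd
        omega
      simp only [GML.cb] at hcb
      have hjc : j ≤ c := le_trans (le_max_left _ _) hcb
      have hcbs : ∀ i, (φs i).cb ≤ c := fun i =>
        le_trans (le_trans (Finset.le_sup (f := fun i => (φs i).cb) (Finset.mem_univ i))
          (le_max_right _ _)) hcb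
      obtain ⟨Z', hZ', hcond⟩ := hZ
      obtain ⟨hforth, hback⟩ := (hcond v v' hz).2 T hT j ⟨hj1, hjc⟩
      simp only [Sat]
      constructor
      · intro h
        set S := (embFinset T G v).filter
          (fun f => ∀ i : Fin T.n, Sat G (φs i) (f i.succ)) with hS
        have hg : ∀ i : Fin j, (i : ℕ) < S.card := fun i => lt_of_lt_of_le i.2 h
        set F : Fin j → (Fin (T.n + 1) → ℕ) :=
          fun i => (S.equivFin.symm ⟨i.1, hg i⟩ : {x // x ∈ S}).1 with hF
        have hFmem : ∀ i, F i ∈ S := fun i => (S.equivFin.symm ⟨i.1, hg i⟩).2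
        have hFinj : Function.Injective F := by
          intro a b hab
          have := S.equivFin.symm.injective (Subtype.ext hab)
          have h2 := congrArg Fin.val this
          exact Fin.ext h2
        have hFemb : ∀ i, IsEmb T G v (F i) := by
          intro i
          have := (Finset.mem_filter.mp (hFmem i)).1
          exact (Finset.mem_filter.mp this).2
        obtain ⟨F', hF'inj, hF'emb, hrel⟩ := hforth F hFinj hFemb
        have hmem' : ∀ i, F' i ∈ (embFinset T G' v').filter
            (fun f => ∀ i : Fin T.n, Sat G' (φs i) (f i.succ)) := by
          intro i
          rw [Finset.mem_filter]
          constructor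
          · rw [embFinset, Finset.mem_filter]
            refine ⟨?_, hF'emb i⟩
            rw [Fintype.mem_piFinset]
            exact fun u => (hF'emb i).2.2.1 u
          · intro i'
            exact (ih i' (hwfs i') l (hmds i') (hcbs i') G G' Z' hZ' _ _
              (hrel i i'.succ)).mp ((Finset.mem_filter.mp (hFmem i)).2 i')
        calc j = (Finset.image F' Finset.univ).card := by
                rw [Finset.card_image_of_injective _ hF'inj, Finset.card_univ,
                  Fintype.card_fin]
          _ ≤ _ := by
                apply Finset.card_le_card
                intro x hx
                obtain ⟨i, _, rfl⟩ := Finset.mem_image.mp hx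
                exact hmem' i
      · intro h
        set S := (embFinset T G' v').filter
          (fun f => ∀ i : Fin T.n, Sat G' (φs i) (f i.succ)) with hS
        have hg : ∀ i : Fin j, (i : ℕ) < S.card := fun i => lt_of_lt_of_le i.2 h
        set F : Fin j → (Fin (T.n + 1) → ℕ) :=
          fun i => (S.equivFin.symm ⟨i.1, hg i⟩ : {x // x ∈ S}).1 with hF
        have hFmem : ∀ i, F i ∈ S := fun i => (S.equivFin.symm ⟨i.1, hg i⟩).2
        have hFinj : Function.Injective F := by
          intro a b hab
          have := S.equivFin.symm.injective (Subtype.ext hab)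
          have h2 := congrArg Fin.val this
          exact Fin.ext h2
        have hFemb : ∀ i, IsEmb T G' v' (F i) := by
          intro i
          have := (Finset.mem_filter.mp (hFmem i)).1
          exact (Finset.mem_filter.mp this).2
        obtain ⟨F', hF'inj, hF'emb, hrel⟩ := hback F hFinj hFemb
        have hmem' : ∀ i, F' i ∈ (embFinset T G v).filter
            (fun f => ∀ i : Fin T.n, Sat G (φs i) (f i.succ)) := by
          intro i
          rw [Finset.mem_filter]
          constructor
          · rw [embFinset, Finset.mem_filter]
            refine ⟨?_, hF'emb i⟩
            rw [Fintype.mem_piFinset]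
            exact fun u => (hF'emb i).2.2.1 u
          · intro i'
            exact (ih i' (hwfs i') l (hmds i') (hcbs i') G G' Z' hZ' _ _
              (hrel i i'.succ)).mpr ((Finset.mem_filter.mp (hFmem i)).2 i')
        calc j = (Finset.image F' Finset.univ).card := by
                rw [Finset.card_image_of_injective _ hF'inj, Finset.card_univ,
                  Fintype.card_fin]
          _ ≤ _ := by
                apply Finset.card_le_card
                intro x hx
                obtain ⟨i, _, rfl⟩ := Finset.mem_image.mp hx
                exact hmem' i

/-- Every `GML(𝒯)` formula of modal depth at most `l` and counting bound
at most `c` is invariant under `l`-`c`-`𝒯`-bisimulation. -/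
theorem gml_invariant_bounded_bisim {AP : Type} [Fintype AP] (𝒯 : Finset Template)
    (φ : GML AP) (l c : ℕ) (hc : 1 ≤ c) (hwf : φ.Wf 𝒯) (hmd : φ.md ≤ l) (hcb : φ.cb ≤ c)
    (G G' : LGraph (AP → Bool)) (v v' : ℕ) (hv : v ∈ G.verts) (hv' : v' ∈ G'.verts)
    (hbis : BBisimilar 𝒯 l c G v G' v') :
    (Sat G φ v ↔ Sat G' φ v') := by
  obtain ⟨Z, hZ, hz⟩ := hbis
  exact sat_iff_of_bisim 𝒯 c φ hwf l hmd hcb G G' Z hZ v v' hz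
end

section
/- For every l ∈ ℕ, every finite set of templates 𝒯, and every finite pointed labelled graph (G,v), the pointed graph (G,v) satisfies its own l-characteristic formula: (G,v) ⊨ χ^l_{(G,v)}. -/
set_option maxHeartbeats 1000000

attribute [local instance 10] Classical.propDecidable

lemma sat_dia {AP : Type} (G : LGraph (AP → Bool)) (T : Template) (j : ℕ)
    (φs : Fin T.n → GML AP) (v : ℕ) :
    Sat G (.dia T j φs) v ↔ j ≤ ((embFinset T G v).filter
        (fun f => ∀ i : Fin T.n, Sat G (φs i) (f i.succ))).card := Iff.rfl

lemma sat_bigConj {AP : Type} (G : LGraph (AP → Bool)) (L : List (GML AP)) (v : ℕ) :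
    Sat G (bigConj L) v ↔ ∀ φ ∈ L, Sat G φ v := by
  induction L with
  | nil => simp [bigConj, Sat]
  | cons φ rest ih => simp [bigConj, Sat, ih]

/-- Every finite pointed labelled graph satisfies its own
`l`-characteristic formula `χ^l_{(G,v)}`. -/
theorem sat_own_char {AP : Type} [Fintype AP] (𝒯 : Finset Template) (l : ℕ)
    (G : LGraph (AP → Bool)) (v : ℕ) (hv : v ∈ G.verts) :
    Sat G (charU 𝒯 l G v) v := by
  induction l generalizing v with
  | zero =>
    simp only [charU, sat_bigConj, List.mem_map]
    rintro φ ⟨p, _, rfl⟩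
    by_cases h : G.lab v p <;> simp [h, Sat]
  | succ l ih =>
    refine ⟨ih v hv, ?_⟩
    rw [sat_bigConj]
    simp only [List.mem_map]
    rintro φ ⟨T, _, rfl⟩
    constructor
    · rw [sat_bigConj]
      simp only [List.mem_map]
      rintro ψ ⟨f, _, rfl⟩
      rw [sat_dia]
      exact Nat.le_refl _
    · intro h
      rw [sat_dia] at h
      have : ((embFinset T G v).filter
          (fun f => ∀ i : Fin T.n, Sat G (GML.top) (f i.succ))).card
          = Scard G T v (fun _ => GML.top) := rfl
      rw [this] at h
      omega
end
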